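/- Let u, v : J → ℝ be differentiable functions on an interval J satisfying u'(t) = −3 u(t)² − v(t) and v'(t) = u(t) for all t ∈ J. Then the function t ↦ G(u(t), v(t)), where G(u, v) = (−3u² − v + 1/6)·exp(6v), is constant on J; i.e. G is a first integral of the planar system u' = −3u² − v, v' = u. -/

import Mathlib

/-- `G(u, v) = (-3u² - v + 1/6)·exp(6v)`, a first integral of `u' = -3u² - v`, `v' = u`. -/
noncomputable def Gfun (u v : ℝ) : ℝ := (-3*u^2 - v + 1/6) * Real.exp (6*v)

/-!
Along a solution, the chain rule gives
`d/dt G(u, v) = exp(6v) · (-6u · u' - (18u² + 6v) · v')`,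
and substituting `u' = -3u² - v`, `v' = u` makes the bracket vanish identically.
A function with zero derivative on an interval is constant there.
-/

theorem Convex.is_const_of_hasDerivWithinAt_zero {𝕜 E : Type*} [RCLike 𝕜]
    [NormedAddCommGroup E] [NormedSpace 𝕜 E] {f : 𝕜 → E} {s : Set 𝕜} (hs : Convex ℝ s)
    (hf : ∀ x ∈ s, HasDerivWithinAt f 0 s x) {x y : 𝕜} (hx : x ∈ s) (hy : y ∈ s) :
    f x = f y := by
  simpa [sub_eq_zero] using
    hs.norm_image_sub_le_of_norm_hasDerivWithin_le hf (C := 0) (by simp) hy hx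

theorem HasDerivWithinAt.Gfun {u v : ℝ → ℝ} {u' v' t : ℝ} {s : Set ℝ}
    (hu : HasDerivWithinAt u u' s t) (hv : HasDerivWithinAt v v' s t) :
    HasDerivWithinAt (fun t => Gfun (u t) (v t))
      (Real.exp (6 * v t) * (-6 * u t * u' - (18 * u t ^ 2 + 6 * v t) * v')) s t := by
  have hfactor : HasDerivWithinAt (fun t => -3 * u t ^ 2 - v t + 1 / 6)
      (-3 * (2 * u t * u') - v') s t := by
    simpa using (((hu.pow 2).const_mul (-3)).sub hv).add_const (1 / 6)
  refine (hfactor.mul (hv.const_mul 6).exp).congr_deriv ?_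
  ring

theorem hasDerivWithinAt_Gfun_of_isSolution {u v : ℝ → ℝ} {t : ℝ} {s : Set ℝ}
    (hu : HasDerivWithinAt u (-3 * (u t) ^ 2 - v t) s t) (hv : HasDerivWithinAt v (u t) s t) :
    HasDerivWithinAt (fun t => Gfun (u t) (v t)) 0 s t := by
  refine (hu.Gfun hv).congr_deriv ?_
  ring

/-- If `u, v` are differentiable on an interval `J` and satisfy `u' = -3u² - v`,
`v' = u` on `J`, then `t ↦ G(u(t), v(t))` is constant on `J`: `G` is a first
integral of the planar system `u' = -3u² - v`, `v' = u`. -/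
theorem stmt_10 (J : Set ℝ) (hJ : Convex ℝ J) (u v : ℝ → ℝ)
    (hu : ∀ t ∈ J, HasDerivWithinAt u (-3*(u t)^2 - v t) J t)
    (hv : ∀ t ∈ J, HasDerivWithinAt v (u t) J t) :
    ∀ s ∈ J, ∀ t ∈ J, Gfun (u s) (v s) = Gfun (u t) (v t) :=
  fun _ hs _ ht => hJ.is_const_of_hasDerivWithinAt_zero
    (fun t ht => hasDerivWithinAt_Gfun_of_isSolution (hu t ht) (hv t ht)) hs ht
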